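/- arXiv:1407.2563 — 3 statements merged into one kernel-verified Lean document; each statement's English description precedes it below -/
import Mathlib

section
/- Let γ, λ ∈ (−1,1) with γ ≠ λ, and let b₁, b₂ ∈ ℝ with b₁ ≠ 0 and b₂ ≠ 0. Then the self-affine set E = { ( ∑_{n=0}^∞ aₙ γⁿ b₁ , ∑_{n=0}^∞ aₙ λⁿ b₂ ) : (aₙ) ∈ {0,1}^ℕ } ⊆ ℝ² (the attractor of the iterated function system {Tx, Tx + (b₁,b₂)} with T = diag(γ, λ)) is connected if and only if there exists f ∈ ℬ with f(γ) = f(λ) = 0. -/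
open Set Filter Topology

noncomputable section

/-- The function on `(-1,1)` defined by the power series with coefficient sequence `a`. -/
def seriesFun (a : ℕ → ℝ) (x : ℝ) : ℝ := ∑' n, a n * x ^ n

/-- `a` is the coefficient sequence of a power series in the class `ℬ`:
constant term `1` and all other coefficients in `{-1, 0, 1}`. -/
def memB (a : ℕ → ℝ) : Prop :=
  a 0 = 1 ∧ ∀ n, 1 ≤ n → a n = -1 ∨ a n = 0 ∨ a n = 1

/-- `a` is the coefficient sequence of a power series in the class `ℬ_{[-1,1]}`:
constant term `1` and all other coefficients in `[-1, 1]`. -/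
def memBI (a : ℕ → ℝ) : Prop :=
  a 0 = 1 ∧ ∀ n, 1 ≤ n → a n ∈ Set.Icc (-1 : ℝ) 1

/-- `F` has at least `k` zeros in `(0, t]`, counted with multiplicity
(multiplicity = order of vanishing). -/
def hasZeros (F : ℝ → ℝ) (k : ℕ) (t : ℝ) : Prop :=
  ∃ (s : Finset ℝ) (d : ℝ → ℕ),
    (∀ x ∈ s, x ∈ Set.Ioc (0 : ℝ) t ∧ 1 ≤ d x ∧ ∀ j < d x, iteratedDeriv j F x = 0) ∧
    k ≤ ∑ x ∈ s, d x

/-- `ξ_k(F)`: the `k`-th zero of `F` in `(0,1)` counted with multiplicity,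
with the convention `ξ_k(F) = 1` if there are fewer than `k` such zeros. -/
def xi (k : ℕ) (F : ℝ → ℝ) : ℝ :=
  sInf (insert 1 {t | t ∈ Set.Ioo (0 : ℝ) 1 ∧ hasZeros F k t})

/-- `α₂`: the smallest double zero in `(0,1)` of a power series in `ℬ_{[-1,1]}`. -/
def alpha2 : ℝ :=
  sInf {x | x ∈ Set.Ioo (0 : ℝ) 1 ∧
    ∃ a, memBI a ∧ seriesFun a x = 0 ∧ deriv (seriesFun a) x = 0}

/-- `α₃`: the smallest triple zero in `(0,1)` of a power series in `ℬ_{[-1,1]}`. -/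
def alpha3 : ℝ :=
  sInf {x | x ∈ Set.Ioo (0 : ℝ) 1 ∧
    ∃ a, memBI a ∧ seriesFun a x = 0 ∧ deriv (seriesFun a) x = 0 ∧
      iteratedDeriv 2 (seriesFun a) x = 0}

/-- The set of values `ξ₂(f)` over `f ∈ ℬ_{[-1,1]}` with `f(γ) = 0`. -/
def phiSet (γ : ℝ) : Set ℝ :=
  {y | ∃ a, memBI a ∧ seriesFun a γ = 0 ∧ y = xi 2 (seriesFun a)}

/-- `φ(γ) = min { ξ₂(f) : f ∈ ℬ_{[-1,1]}, f(γ) = 0 }`. -/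
def phi (γ : ℝ) : ℝ := sInf (phiSet γ)

/-- The set of values `ξ₃(f)` over `f ∈ ℬ_{[-1,1]}` with `f(γ) = 0`. -/
def psiSet (γ : ℝ) : Set ℝ :=
  {y | ∃ a, memBI a ∧ seriesFun a γ = 0 ∧ y = xi 3 (seriesFun a)}

/-- `ψ(γ) = min { ξ₃(f) : f ∈ ℬ_{[-1,1]}, f(γ) = 0 }`. -/
def psi (γ : ℝ) : ℝ := sInf (psiSet γ)

/-- The `(*)`-function `h_k^{(a)}(x) = 1 - x - ⋯ - x^(k-1) + a x^k + x^(k+1)/(1-x)`. -/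
def hstar (k : ℕ) (a : ℝ) (x : ℝ) : ℝ :=
  1 - ∑ i ∈ Finset.Ico 1 k, x ^ i + a * x ^ k + x ^ (k + 1) / (1 - x)

/-- The `(**)`-function
`H_{k,ℓ}^{(a,b)}(x) = 1 - ∑_{i=1}^{k-1} x^i + a x^k + ∑_{i=k+1}^{ℓ-1} x^i + b x^ℓ - x^(ℓ+1)/(1-x)`. -/
def Hstar (k l : ℕ) (a b : ℝ) (x : ℝ) : ℝ :=
  1 - ∑ i ∈ Finset.Ico 1 k, x ^ i + a * x ^ k + ∑ i ∈ Finset.Ico (k + 1) l, x ^ i +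
    b * x ^ l - x ^ (l + 1) / (1 - x)

/-- The set `𝒩₊`. -/
def Nplus : Set (ℝ × ℝ) :=
  {p | 0 < p.1 ∧ p.1 < p.2 ∧ p.2 < 1 ∧
    ∃ a, memB a ∧ seriesFun a p.1 = 0 ∧ seriesFun a p.2 = 0}

/-- The set `𝒩̃₊`. -/
def NtildePlus : Set (ℝ × ℝ) :=
  {p | p ∈ Nplus ∧ ∃ a, memB a ∧ seriesFun a p.1 = 0 ∧ seriesFun a p.2 = 0 ∧
    hasZeros (seriesFun a) 3 p.2}

/-- The "trivial" part `𝒩_t` of the connectedness locus. -/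
def Nt : Set (ℝ × ℝ) :=
  {p | p.1 ∈ Set.Ioo (-1 : ℝ) 1 ∧ p.2 ∈ Set.Ioo (-1 : ℝ) 1 ∧ 1 / 2 ≤ |p.1 * p.2|}

/-- The region `Δ`. -/
def Delta : Set (ℝ × ℝ) :=
  {p | p.1 ∈ Set.Ioo (0 : ℝ) 1 ∧ p.2 ∈ Set.Ioo (0 : ℝ) 1 ∧ p.1 < p.2 ∧ p.1 * p.2 < 1 / 2}

/-!
The attractor `E` is compact and `E = f₀ E ∪ f₁ E` for the contractions `f₀ x = T x` and
`f₁ x = T x + (b₁, b₂)`. If the two pieces are disjoint they disconnect `E`. If they share a point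
`p`, induction on `n` joins any two points of `E` by a chain in `E` with steps at most
`ρⁿ diam E`, passing through `p` and using that each piece is a `ρ`-contracted copy of `E`; a
compact set that is `ε`-chain connected for every `ε > 0` is connected. Finally, `f₀ x = f₁ y`
for `x, y ∈ E` with digit sequences `a, a'` means `1 + ∑ (a'ₙ - aₙ) zⁿ⁺¹` vanishes at `z = γ` and
`z = λ`, and these are exactly the series of `ℬ`.
-/

open scoped NNReal

section EpsChain

variable {X : Type*} [PseudoMetricSpace X]

def EpsChain (E : Set X) (ε : ℝ) : X → X → Prop :=
  Relation.ReflTransGen fun p q => q ∈ E ∧ dist p q ≤ ε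

variable {E F : Set X} {ε ε' : ℝ} {x y : X}

lemma EpsChain.mono (hEF : E ⊆ F) (hε : ε ≤ ε') (h : EpsChain E ε x y) : EpsChain F ε' x y :=
  Relation.ReflTransGen.mono (fun _ _ hpq => ⟨hEF hpq.1, hpq.2.trans hε⟩) _ _ h

lemma EpsChain.image {f : X → X} {K : ℝ≥0} (hf : LipschitzWith K f) (h : EpsChain E ε x y) :
    EpsChain (f '' E) (K * ε) (f x) (f y) := by
  induction h with
  | refl => exact .refl
  | tail _ hpq ih =>
    exact ih.tail ⟨mem_image_of_mem f hpq.1,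
      (hf.dist_le_mul _ _).trans (mul_le_mul_of_nonneg_left hpq.2 K.coe_nonneg)⟩

/-- Chains of small steps starting in `E ∩ t` cannot jump to a closed set `t'` that stays away
from `E ∩ t`. -/
theorem isPreconnected_of_forall_epsChain (hE : IsCompact E)
    (h : ∀ ε > 0, ∀ x ∈ E, ∀ y ∈ E, EpsChain E ε x y) : IsPreconnected E := by
  rw [isPreconnected_closed_iff]
  rintro t t' ht ht' hcover ⟨x, hxE, hxt⟩ ⟨y, hyE, hyt'⟩
  by_contra hdisj
  rw [not_nonempty_iff_eq_empty, ← inter_assoc] at hdisj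
  obtain ⟨δ, hδ, hsep⟩ := (disjoint_iff_inter_eq_empty.mpr hdisj).exists_thickenings
    (hE.inter_right ht) ht'
  have hstay : ∀ z, EpsChain E (δ / 2) x z → z ∈ E ∩ t := by
    intro z hz
    induction hz with
    | refl => exact ⟨hxE, hxt⟩
    | @tail p q _ hpq hp =>
      refine ⟨hpq.1, (hcover hpq.1).resolve_right fun hqt' => hsep.ne_of_mem ?_
        (Metric.self_subset_thickening hδ _ hqt') rfl⟩
      rw [dist_comm] at hpq
      exact Metric.mem_thickening_iff.mpr ⟨p, hp, hpq.2.trans_lt (half_lt_self hδ)⟩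
  exact hdisj.subset ⟨hstay y (h _ (half_pos hδ) x hxE y hyE), hyt'⟩

theorem isPreconnected_of_eq_union_image {f g : X → X} {K : ℝ≥0} (hE : IsCompact E)
    (hK : K < 1) (hf : LipschitzWith K f) (hg : LipschitzWith K g)
    (hcover : E = f '' E ∪ g '' E) (hoverlap : (f '' E ∩ g '' E).Nonempty) :
    IsPreconnected E := by
  obtain ⟨p, hpf, hpg⟩ := hoverlap
  have hsub : ∀ {φ : X → X}, LipschitzWith K φ → φ '' E ⊆ E → ∀ n : ℕ,
      (∀ x ∈ E, ∀ y ∈ E, EpsChain E (K ^ n * Metric.diam E) x y) →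
      ∀ x ∈ φ '' E, ∀ y ∈ φ '' E, EpsChain E (K ^ (n + 1) * Metric.diam E) x y := by
    rintro φ hφ hφE n hn _ ⟨x, hx, rfl⟩ _ ⟨y, hy, rfl⟩
    exact ((hn x hx y hy).image hφ).mono hφE (by rw [pow_succ', mul_assoc])
  have hfE : f '' E ⊆ E := subset_union_left.trans_eq hcover.symm
  have hgE : g '' E ⊆ E := subset_union_right.trans_eq hcover.symm
  have hchain : ∀ n : ℕ, ∀ x ∈ E, ∀ y ∈ E, EpsChain E (K ^ n * Metric.diam E) x y := by
    intro n
    induction n with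
    | zero =>
      intro x hx y hy
      exact .single ⟨hy, by simpa using Metric.dist_le_diam_of_mem hE.isBounded hx hy⟩
    | succ n ih =>
      have hvia : ∀ x ∈ E, EpsChain E (K ^ (n + 1) * Metric.diam E) x p ∧
          EpsChain E (K ^ (n + 1) * Metric.diam E) p x := by
        intro x hx
        rcases hcover.subset hx with hx | hx
        · exact ⟨hsub hf hfE n ih x hx p hpf, hsub hf hfE n ih p hpf x hx⟩
        · exact ⟨hsub hg hgE n ih x hx p hpg, hsub hg hgE n ih p hpg x hx⟩
      exact fun x hx y hy => (hvia x hx).1.trans (hvia y hy).2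
  refine isPreconnected_of_forall_epsChain hE fun ε hε x hx y hy => ?_
  have hlim : Tendsto (fun n : ℕ => (K : ℝ) ^ n * Metric.diam E) atTop (𝓝 0) := by
    simpa using (tendsto_pow_atTop_nhds_zero_of_lt_one K.coe_nonneg hK).mul_const (Metric.diam E)
  obtain ⟨n, hn⟩ := (hlim.eventually_lt_const hε).exists
  exact (hchain n x hx y hy).mono subset_rfl hn.le

end EpsChain

theorem inter_image_nonempty_of_isPreconnected {X : Type*} [TopologicalSpace X] [T2Space X]
    {E : Set X} {f g : X → X} (hE : IsCompact E) (hne : E.Nonempty) (hf : Continuous f)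
    (hg : Continuous g) (hcover : E = f '' E ∪ g '' E) (hconn : IsPreconnected E) :
    (f '' E ∩ g '' E).Nonempty := by
  have hfE : f '' E ⊆ E := subset_union_left.trans_eq hcover.symm
  have hgE : g '' E ⊆ E := subset_union_right.trans_eq hcover.symm
  obtain ⟨x, hx⟩ := hne
  obtain ⟨z, -, hz⟩ := isPreconnected_closed_iff.mp hconn _ _ (hE.image hf).isClosed
    (hE.image hg).isClosed hcover.subset ⟨f x, hfE ⟨x, hx, rfl⟩, x, hx, rfl⟩
    ⟨g x, hgE ⟨x, hx, rfl⟩, x, hx, rfl⟩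
  exact ⟨z, hz⟩

theorem isConnected_iff_inter_image_nonempty {X : Type*} [MetricSpace X] {E : Set X}
    {f g : X → X} {K : ℝ≥0} (hE : IsCompact E) (hne : E.Nonempty) (hK : K < 1)
    (hf : LipschitzWith K f) (hg : LipschitzWith K g) (hcover : E = f '' E ∪ g '' E) :
    IsConnected E ↔ (f '' E ∩ g '' E).Nonempty :=
  ⟨fun h => inter_image_nonempty_of_isPreconnected hE hne hf.continuous hg.continuous hcover
    h.isPreconnected,
   fun h => ⟨hne, isPreconnected_of_eq_union_image hE hK hf hg hcover h⟩⟩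

def seqCons (v : ℝ) (a : ℕ → ℝ) : ℕ → ℝ
  | 0 => v
  | n + 1 => a n

@[simp] lemma seqCons_zero (v : ℝ) (a : ℕ → ℝ) : seqCons v a 0 = v := rfl

@[simp] lemma seqCons_succ (v : ℝ) (a : ℕ → ℝ) (n : ℕ) : seqCons v a (n + 1) = a n := rfl

lemma seqCons_head_tail (a : ℕ → ℝ) : seqCons (a 0) (fun n => a (n + 1)) = a := by
  funext n; cases n <;> rfl

lemma seqCons_sub_seqCons (v w : ℝ) (a a' : ℕ → ℝ) :
    seqCons v a - seqCons w a' = seqCons (v - w) (a - a') := by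
  funext n; cases n <;> rfl

section PowerSeries

variable {x M : ℝ} {a a' : ℕ → ℝ}

lemma summable_mul_pow_of_abs_le (hx : |x| < 1) (ha : ∀ n, |a n| ≤ M) :
    Summable fun n => a n * x ^ n :=
  .of_norm_bounded ((summable_geometric_of_lt_one (abs_nonneg x) hx).mul_left M) fun n => by
    rw [norm_mul, norm_pow, Real.norm_eq_abs, Real.norm_eq_abs]
    exact mul_le_mul_of_nonneg_right (ha n) (by positivity)

lemma seriesFun_seqCons (hx : |x| < 1) (ha : ∀ n, |a n| ≤ M) (v : ℝ) :
    seriesFun (seqCons v a) x = v + x * seriesFun a x := by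
  have hshift : (fun n => seqCons v a (n + 1) * x ^ (n + 1)) = fun n => x * (a n * x ^ n) := by
    funext n; rw [seqCons_succ, pow_succ]; ring
  rw [seriesFun, tsum_eq_zero_add', hshift, tsum_mul_left, seriesFun]
  · simp
  · rw [hshift]; exact (summable_mul_pow_of_abs_le hx ha).mul_left x

lemma seriesFun_sub (hx : |x| < 1) (ha : ∀ n, |a n| ≤ M) (ha' : ∀ n, |a' n| ≤ M) :
    seriesFun (a - a') x = seriesFun a x - seriesFun a' x := by
  rw [seriesFun, seriesFun, seriesFun, ← Summable.tsum_sub (summable_mul_pow_of_abs_le hx ha)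
    (summable_mul_pow_of_abs_le hx ha')]
  simp only [Pi.sub_apply, sub_mul]

lemma continuousOn_seriesFun (hx : |x| < 1) :
    ContinuousOn (fun a => seriesFun a x) {a | ∀ n, |a n| ≤ M} :=
  continuousOn_tsum (fun n => ((continuous_apply n).mul continuous_const).continuousOn)
    ((summable_geometric_of_lt_one (abs_nonneg x) hx).mul_left M) fun n a ha => by
      rw [norm_mul, norm_pow, Real.norm_eq_abs, Real.norm_eq_abs]
      exact mul_le_mul_of_nonneg_right (ha n) (by positivity)

end PowerSeries

def binarySeqs : Set (ℕ → ℝ) := univ.pi fun _ => {0, 1}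

lemma mem_binarySeqs {a : ℕ → ℝ} : a ∈ binarySeqs ↔ ∀ n, a n = 0 ∨ a n = 1 := by
  simp [binarySeqs]

lemma abs_le_one_of_mem_binarySeqs {a : ℕ → ℝ} (ha : a ∈ binarySeqs) (n : ℕ) : |a n| ≤ 1 := by
  rcases mem_binarySeqs.mp ha n with h | h <;> simp [h]

lemma isCompact_binarySeqs : IsCompact binarySeqs :=
  isCompact_univ_pi fun _ => (toFinite _).isCompact

lemma seqCons_mem_binarySeqs {v : ℝ} (hv : v = 0 ∨ v = 1) {a : ℕ → ℝ} (ha : a ∈ binarySeqs) :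
    seqCons v a ∈ binarySeqs :=
  mem_binarySeqs.mpr fun n => by cases n with
    | zero => exact hv
    | succ n => exact mem_binarySeqs.mp ha n

lemma binarySeqs_eq_union :
    binarySeqs = seqCons 0 '' binarySeqs ∪ seqCons 1 '' binarySeqs := by
  refine Subset.antisymm (fun a ha => ?_) (union_subset ?_ ?_)
  · have htail : (fun n => a (n + 1)) ∈ binarySeqs :=
      mem_binarySeqs.mpr fun n => mem_binarySeqs.mp ha (n + 1)
    rcases mem_binarySeqs.mp ha 0 with h | h
    · exact .inl ⟨_, htail, by rw [← h, seqCons_head_tail]⟩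
    · exact .inr ⟨_, htail, by rw [← h, seqCons_head_tail]⟩
  · exact image_subset_iff.mpr fun a ha => seqCons_mem_binarySeqs (.inl rfl) ha
  · exact image_subset_iff.mpr fun a ha => seqCons_mem_binarySeqs (.inr rfl) ha

lemma memB_iff_exists_binarySeqs {c : ℕ → ℝ} :
    memB c ↔ ∃ a ∈ binarySeqs, ∃ a' ∈ binarySeqs, c = seqCons 1 a - seqCons 0 a' := by
  constructor
  · rintro ⟨hc0, hc⟩
    refine ⟨fun n => if c (n + 1) = 1 then 1 else 0, mem_binarySeqs.mpr fun n => by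
      split_ifs <;> simp, fun n => if c (n + 1) = -1 then 1 else 0, mem_binarySeqs.mpr fun n => by
      split_ifs <;> simp, ?_⟩
    rw [seqCons_sub_seqCons, sub_zero]
    nth_rewrite 1 [← seqCons_head_tail c]
    rw [hc0]
    congr 1
    funext n
    rcases hc (n + 1) n.succ_pos with h | h | h <;> norm_num [h]
  · rintro ⟨a, ha, a', ha', rfl⟩
    refine ⟨by simp, fun n hn => ?_⟩
    obtain ⟨n, rfl⟩ := Nat.exists_eq_add_of_le' hn
    rcases mem_binarySeqs.mp ha n with h | h <;> rcases mem_binarySeqs.mp ha' n with h' | h' <;>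
      simp [h, h']

section Attractor

variable {γ lam : ℝ} (b₁ b₂ : ℝ)

variable (γ lam) in
def coding (a : ℕ → ℝ) : ℝ × ℝ :=
  (∑' n, a n * γ ^ n * b₁, ∑' n, a n * lam ^ n * b₂)

variable (γ lam) in
/-- `digitMap 0` and `digitMap 1` are the maps `T x` and `T x + (b₁, b₂)` of the iterated
function system, `T = diag(γ, λ)`. -/
def digitMap (v : ℝ) (p : ℝ × ℝ) : ℝ × ℝ :=
  (γ * p.1 + v * b₁, lam * p.2 + v * b₂)

lemma coding_eq (a : ℕ → ℝ) :
    coding γ lam b₁ b₂ a = (seriesFun a γ * b₁, seriesFun a lam * b₂) := by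
  simp only [coding, seriesFun, tsum_mul_right]

variable (hγ : |γ| < 1) (hlam : |lam| < 1)
include hγ hlam

lemma coding_seqCons {a : ℕ → ℝ} {M : ℝ} (ha : ∀ n, |a n| ≤ M) (v : ℝ) :
    coding γ lam b₁ b₂ (seqCons v a) = digitMap γ lam b₁ b₂ v (coding γ lam b₁ b₂ a) := by
  simp only [coding_eq, seriesFun_seqCons hγ ha, seriesFun_seqCons hlam ha, digitMap]
  ext <;> ring

lemma isCompact_image_coding : IsCompact (coding γ lam b₁ b₂ '' binarySeqs) := by
  refine isCompact_binarySeqs.image_of_continuousOn ?_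
  simp only [funext (coding_eq b₁ b₂)]
  exact (((continuousOn_seriesFun hγ).mul continuousOn_const).prodMk
    ((continuousOn_seriesFun hlam).mul continuousOn_const)).mono
    fun a ha => abs_le_one_of_mem_binarySeqs ha

lemma image_digitMap_image_coding (v : ℝ) :
    digitMap γ lam b₁ b₂ v '' (coding γ lam b₁ b₂ '' binarySeqs) =
      coding γ lam b₁ b₂ '' (seqCons v '' binarySeqs) := by
  rw [image_image, image_image]
  exact image_congr fun a ha => (coding_seqCons b₁ b₂ hγ hlam
    (abs_le_one_of_mem_binarySeqs ha) v).symm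

lemma image_coding_eq_union : coding γ lam b₁ b₂ '' binarySeqs =
    digitMap γ lam b₁ b₂ 0 '' (coding γ lam b₁ b₂ '' binarySeqs) ∪
      digitMap γ lam b₁ b₂ 1 '' (coding γ lam b₁ b₂ '' binarySeqs) := by
  rw [image_digitMap_image_coding b₁ b₂ hγ hlam, image_digitMap_image_coding b₁ b₂ hγ hlam,
    ← image_union, ← binarySeqs_eq_union]

omit hγ hlam in
lemma lipschitzWith_digitMap (v : ℝ) :
    LipschitzWith (max ‖γ‖₊ ‖lam‖₊) (digitMap γ lam b₁ b₂ v) := by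
  have affine : ∀ c b : ℝ, LipschitzWith ‖c‖₊ fun u : ℝ => c * u + b := fun c b =>
    LipschitzWith.of_dist_le_mul fun u w => by
      rw [dist_add_right, dist_eq_norm, dist_eq_norm, ← mul_sub, norm_mul, coe_nnnorm]
  have h := ((affine γ (v * b₁)).comp LipschitzWith.prod_fst).prodMk
    ((affine lam (v * b₂)).comp LipschitzWith.prod_snd)
  rwa [mul_one, mul_one] at h

variable {b₁ b₂} in
lemma coding_eq_coding_iff (hb₁ : b₁ ≠ 0) (hb₂ : b₂ ≠ 0) {a a' : ℕ → ℝ} {M : ℝ}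
    (ha : ∀ n, |a n| ≤ M) (ha' : ∀ n, |a' n| ≤ M) :
    coding γ lam b₁ b₂ a = coding γ lam b₁ b₂ a' ↔
      seriesFun (a - a') γ = 0 ∧ seriesFun (a - a') lam = 0 := by
  rw [coding_eq, coding_eq, Prod.ext_iff, seriesFun_sub hγ ha ha', seriesFun_sub hlam ha ha',
    mul_left_inj' hb₁, mul_left_inj' hb₂, sub_eq_zero, sub_eq_zero]

variable {b₁ b₂} in
lemma inter_image_digitMap_nonempty_iff (hb₁ : b₁ ≠ 0) (hb₂ : b₂ ≠ 0) :
    (digitMap γ lam b₁ b₂ 0 '' (coding γ lam b₁ b₂ '' binarySeqs) ∩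
        digitMap γ lam b₁ b₂ 1 '' (coding γ lam b₁ b₂ '' binarySeqs)).Nonempty ↔
      ∃ c : ℕ → ℝ, memB c ∧ seriesFun c γ = 0 ∧ seriesFun c lam = 0 := by
  have hbd : ∀ {v} {a : ℕ → ℝ}, (v = 0 ∨ v = 1) → a ∈ binarySeqs → ∀ n, |seqCons v a n| ≤ 1 :=
    fun hv ha => abs_le_one_of_mem_binarySeqs (seqCons_mem_binarySeqs hv ha)
  rw [image_digitMap_image_coding b₁ b₂ hγ hlam, image_digitMap_image_coding b₁ b₂ hγ hlam]
  constructor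
  · rintro ⟨p, ⟨_, ⟨a', ha', rfl⟩, hp₀⟩, ⟨_, ⟨a, ha, rfl⟩, hp₁⟩⟩
    exact ⟨_, memB_iff_exists_binarySeqs.mpr ⟨a, ha, a', ha', rfl⟩,
      (coding_eq_coding_iff hγ hlam hb₁ hb₂ (hbd (.inr rfl) ha) (hbd (.inl rfl) ha')).mp
        (hp₁.trans hp₀.symm)⟩
  · rintro ⟨c, hc, hcγ, hclam⟩
    obtain ⟨a, ha, a', ha', rfl⟩ := memB_iff_exists_binarySeqs.mp hc
    refine ⟨_, ⟨_, mem_image_of_mem _ ha', ?_⟩, mem_image_of_mem _ (mem_image_of_mem _ ha)⟩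
    exact ((coding_eq_coding_iff hγ hlam hb₁ hb₂ (hbd (.inr rfl) ha) (hbd (.inl rfl) ha')).mpr
      ⟨hcγ, hclam⟩).symm

end Attractor

theorem stmt1_general (γ lam : ℝ) (hγ : γ ∈ Set.Ioo (-1 : ℝ) 1) (hlam : lam ∈ Set.Ioo (-1 : ℝ) 1)
    (b₁ b₂ : ℝ) (hb₁ : b₁ ≠ 0) (hb₂ : b₂ ≠ 0) :
    IsConnected {p : ℝ × ℝ | ∃ a : ℕ → ℝ, (∀ n, a n = 0 ∨ a n = 1) ∧
        p.1 = ∑' n, a n * γ ^ n * b₁ ∧ p.2 = ∑' n, a n * lam ^ n * b₂} ↔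
      ∃ c : ℕ → ℝ, memB c ∧ seriesFun c γ = 0 ∧ seriesFun c lam = 0 := by
  have hγ' : |γ| < 1 := abs_lt.mpr hγ
  have hlam' : |lam| < 1 := abs_lt.mpr hlam
  have hE : {p : ℝ × ℝ | ∃ a : ℕ → ℝ, (∀ n, a n = 0 ∨ a n = 1) ∧
      p.1 = ∑' n, a n * γ ^ n * b₁ ∧ p.2 = ∑' n, a n * lam ^ n * b₂} =
        coding γ lam b₁ b₂ '' binarySeqs := by
    ext p
    simp only [mem_ofPred_eq, mem_image, mem_binarySeqs, coding, Prod.ext_iff, eq_comm]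
  have hK : max ‖γ‖₊ ‖lam‖₊ < 1 := max_lt (by simpa [← NNReal.coe_lt_coe] using hγ')
    (by simpa [← NNReal.coe_lt_coe] using hlam')
  rw [hE, isConnected_iff_inter_image_nonempty (isCompact_image_coding b₁ b₂ hγ' hlam')
    ⟨_, mem_image_of_mem _ (mem_binarySeqs.mpr fun _ => .inl rfl)⟩ hK
    (lipschitzWith_digitMap b₁ b₂ 0) (lipschitzWith_digitMap b₁ b₂ 1)
    (image_coding_eq_union b₁ b₂ hγ' hlam')]
  exact inter_image_digitMap_nonempty_iff hγ' hlam' hb₁ hb₂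

/-- For `γ, λ ∈ (-1,1)` distinct and `b₁, b₂ ≠ 0`, the attractor of
`{Tx, Tx + (b₁,b₂)}` with `T = diag(γ,λ)` is connected iff some `f ∈ ℬ` vanishes at
both `γ` and `λ`. -/
theorem stmt1 (γ lam : ℝ) (hγ : γ ∈ Set.Ioo (-1 : ℝ) 1) (hlam : lam ∈ Set.Ioo (-1 : ℝ) 1)
    (hne : γ ≠ lam) (b₁ b₂ : ℝ) (hb₁ : b₁ ≠ 0) (hb₂ : b₂ ≠ 0) :
    IsConnected {p : ℝ × ℝ | ∃ a : ℕ → ℝ, (∀ n, a n = 0 ∨ a n = 1) ∧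
        p.1 = ∑' n, a n * γ ^ n * b₁ ∧ p.2 = ∑' n, a n * lam ^ n * b₂} ↔
      ∃ c : ℕ → ℝ, memB c ∧ seriesFun c γ = 0 ∧ seriesFun c lam = 0 :=
  stmt1_general γ lam hγ hlam b₁ b₂ hb₁ hb₂
end
end

section
/- Let λ ∈ (−1,1), let T be the 2×2 real matrix [[λ, 1], [0, λ]], and let b = (b₁, b₂) ∈ ℝ² with b₂ ≠ 0. Then the self-affine set E = { ∑_{n=0}^∞ aₙ Tⁿ b : (aₙ) ∈ {0,1}^ℕ } ⊆ ℝ² (the attractor of the iterated function system {Tx, Tx + b}) is connected if and only if there exists f ∈ ℬ with f(λ) = 0 and f′(λ) = 0. -/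
open Set Filter Topology

noncomputable section

/-!
Let `E` be the attractor of `x ↦ T x` and `x ↦ b + T x`. If the pieces `T E` and `b + T E` are
disjoint they split `E` into two compact sets. If they meet, any two points of `E` are joined by a
chain whose steps lie in translates of `Tⁿ E`, of diameter at most `‖Tⁿ‖ diam E → 0`; a compact set
with arbitrarily fine chains is connected. The pieces meet iff `∑ cₙ Tⁿ b = 0` for some `c ∈ ℬ`
(subtract the digit sequences of the two representations). For the Jordan block,
`Tⁿ = λⁿ I + n λⁿ⁻¹ N`, so this sum is `f(λ) b + f'(λ) N b` with `N b = (b₂, 0)`, and `b₂ ≠ 0`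
makes it vanish exactly when `f(λ) = f'(λ) = 0`.
-/

open Relation

theorem IsCompact.isPreconnected_of_forall_chain {X : Type*} [MetricSpace X] {K : Set X}
    (hK : IsCompact K)
    (h : ∀ ε > 0, ∀ x ∈ K, ∀ y ∈ K, ReflTransGen (fun z w => w ∈ K ∧ dist z w < ε) x y) :
    IsPreconnected K := by
  rw [isPreconnected_closed_iff]
  rintro t t' ht ht' hcover ⟨x, hxK, hxt⟩ ⟨y, hyK, hyt'⟩
  by_contra hdisj
  obtain ⟨r, hr, hsep⟩ := Metric.exists_pos_forall_lt_edist (hK.inter_right ht)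
    (hK.inter_right ht').isClosed (Set.disjoint_left.2 fun z hz hz' => hdisj ⟨z, hz.1, hz.2, hz'.2⟩)
  have hstay : ∀ w, ReflTransGen (fun z w => w ∈ K ∧ dist z w < r) x w → w ∈ K ∩ t := by
    intro w hw
    induction hw with
    | refl => exact ⟨hxK, hxt⟩
    | @tail z w _ hzw hz =>
      refine ⟨hzw.1, (hcover hzw.1).resolve_right fun hwt' => ?_⟩
      have hrw : (r : ℝ) < dist z w := by
        have := hsep z hz w ⟨hzw.1, hwt'⟩
        rw [edist_nndist, ENNReal.coe_lt_coe, ← NNReal.coe_lt_coe] at this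
        exact this
      exact hzw.2.not_gt hrw
  exact hdisj ⟨y, hyK, (hstay y (h r hr x hxK y hyK)).2, hyt'⟩

lemma abs_le_one_of_eq_zero_or_eq_one {a : ℕ → ℝ} (ha : ∀ n, a n = 0 ∨ a n = 1) (n : ℕ) :
    |a n| ≤ 1 := by
  rcases ha n with h | h <;> simp [h]

lemma abs_le_one_of_memB {c : ℕ → ℝ} (hc : memB c) (n : ℕ) : |c n| ≤ 1 := by
  rcases n with _ | n
  · simp [hc.1]
  · rcases hc.2 (n + 1) n.succ_pos with h | h | h <;> simp [h]

section DigitSum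

variable {V : Type*} [NormedAddCommGroup V] [NormedSpace ℝ V] (T : V →L[ℝ] V) (b : V)

def digitSum (a : ℕ → ℝ) : V := ∑' n, a n • (T ^ n) b

def attractor : Set V := digitSum T b '' {a | ∀ n, a n = 0 ∨ a n = 1}

variable {T}

lemma attractor_nonempty : (attractor T b).Nonempty :=
  ⟨_, 0, fun _ => .inl rfl, rfl⟩

variable [CompleteSpace V]

lemma summable_smul_pow_apply (hT : Summable fun n => ‖T ^ n‖) {a : ℕ → ℝ}
    (ha : ∀ n, |a n| ≤ 1) : Summable fun n => a n • (T ^ n) b :=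
  .of_norm_bounded (hT.mul_right ‖b‖) fun n => by
    rw [norm_smul, Real.norm_eq_abs]
    exact (mul_le_of_le_one_left (norm_nonneg _) (ha n)).trans ((T ^ n).le_opNorm b)

lemma continuousOn_digitSum (hT : Summable fun n => ‖T ^ n‖) :
    ContinuousOn (digitSum T b) {a | ∀ n, |a n| ≤ 1} := by
  refine (tendstoUniformlyOn_tsum (hT.mul_right ‖b‖) fun n a ha => ?_).continuousOn
    (.of_forall fun s => ?_)
  · rw [norm_smul, Real.norm_eq_abs]
    exact (mul_le_of_le_one_left (norm_nonneg _) (ha n)).trans ((T ^ n).le_opNorm b)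
  · fun_prop

lemma isCompact_attractor (hT : Summable fun n => ‖T ^ n‖) : IsCompact (attractor T b) := by
  have hdigits : IsCompact {a : ℕ → ℝ | ∀ n, a n = 0 ∨ a n = 1} := by
    simpa [Set.pi] using isCompact_univ_pi fun _ => (Set.toFinite ({0, 1} : Set ℝ)).isCompact
  exact hdigits.image_of_continuousOn <|
    (continuousOn_digitSum b hT).mono fun _ => abs_le_one_of_eq_zero_or_eq_one

lemma digitSum_eq_smul_add_apply (hT : Summable fun n => ‖T ^ n‖) {a : ℕ → ℝ}
    (ha : ∀ n, |a n| ≤ 1) : digitSum T b a = a 0 • b + T (digitSum T b fun n => a (n + 1)) := by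
  rw [digitSum, (summable_smul_pow_apply b hT ha).tsum_eq_zero_add, digitSum,
    T.map_tsum (summable_smul_pow_apply b hT fun n => ha (n + 1))]
  simp [pow_succ']

lemma digitSum_sub (hT : Summable fun n => ‖T ^ n‖) {a a' : ℕ → ℝ}
    (ha : ∀ n, |a n| ≤ 1) (ha' : ∀ n, |a' n| ≤ 1) :
    digitSum T b a - digitSum T b a' = digitSum T b (a - a') := by
  simp only [digitSum, Pi.sub_apply, sub_smul]
  exact ((summable_smul_pow_apply b hT ha).tsum_sub (summable_smul_pow_apply b hT ha')).symm

lemma mem_attractor_iff (hT : Summable fun n => ‖T ^ n‖) {x : V} :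
    x ∈ attractor T b ↔ ∃ t : ℝ, (t = 0 ∨ t = 1) ∧ ∃ y ∈ attractor T b, t • b + T y = x := by
  constructor
  · rintro ⟨a, ha, rfl⟩
    exact ⟨a 0, ha 0, _, ⟨fun n => a (n + 1), fun n => ha (n + 1), rfl⟩,
      (digitSum_eq_smul_add_apply b hT (abs_le_one_of_eq_zero_or_eq_one ha)).symm⟩
  · rintro ⟨t, ht, _, ⟨a, ha, rfl⟩, rfl⟩
    let a' : ℕ → ℝ := fun | 0 => t | n + 1 => a n
    have ha' : ∀ n, a' n = 0 ∨ a' n = 1 := by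
      rintro (_ | n)
      exacts [ht, ha n]
    exact ⟨a', ha', digitSum_eq_smul_add_apply b hT (abs_le_one_of_eq_zero_or_eq_one ha')⟩

theorem exists_memB_digitSum_eq_zero_iff (hT : Summable fun n => ‖T ^ n‖) :
    (∃ c, memB c ∧ digitSum T b c = 0) ↔
      ∃ y ∈ attractor T b, ∃ z ∈ attractor T b, T y = b + T z := by
  constructor
  · rintro ⟨c, hc, hsum⟩
    set a : ℕ → ℝ := fun n => if c (n + 1) = -1 then 1 else 0
    set a' : ℕ → ℝ := fun n => if c (n + 1) = 1 then 1 else 0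
    have ha : ∀ n, a n = 0 ∨ a n = 1 := fun n => by by_cases h : c (n + 1) = -1 <;> simp [a, h]
    have ha' : ∀ n, a' n = 0 ∨ a' n = 1 := fun n => by by_cases h : c (n + 1) = 1 <;> simp [a', h]
    have htail : (fun n => c (n + 1)) = a' - a := by
      funext n
      rcases hc.2 (n + 1) n.succ_pos with h | h | h <;> norm_num [a, a', h]
    refine ⟨_, ⟨a, ha, rfl⟩, _, ⟨a', ha', rfl⟩, ?_⟩
    rw [digitSum_eq_smul_add_apply b hT (abs_le_one_of_memB hc), hc.1, htail,
      ← digitSum_sub b hT (abs_le_one_of_eq_zero_or_eq_one ha')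
        (abs_le_one_of_eq_zero_or_eq_one ha), map_sub] at hsum
    linear_combination (norm := module) -hsum
  · rintro ⟨_, ⟨a, ha, rfl⟩, _, ⟨a', ha', rfl⟩, heq⟩
    let c : ℕ → ℝ := fun | 0 => 1 | n + 1 => a' n - a n
    have hc : memB c := by
      refine ⟨rfl, fun n hn => ?_⟩
      obtain ⟨n, rfl⟩ := Nat.exists_eq_add_of_le' hn
      rcases ha n with h | h <;> rcases ha' n with h' | h' <;> simp [c, h, h']
    refine ⟨c, hc, ?_⟩
    rw [digitSum_eq_smul_add_apply b hT (abs_le_one_of_memB hc)]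
    change (1 : ℝ) • b + T (digitSum T b (a' - a)) = 0
    rw [← digitSum_sub b hT (abs_le_one_of_eq_zero_or_eq_one ha')
      (abs_le_one_of_eq_zero_or_eq_one ha), map_sub]
    linear_combination (norm := module) -heq

end DigitSum

section Connectedness

variable {V : Type*} [NormedAddCommGroup V] [NormedSpace ℝ V] {T : V →L[ℝ] V} (b : V)

variable (T) in
def SameLevelPiece (n : ℕ) (z w : V) : Prop :=
  z ∈ attractor T b ∧ w ∈ attractor T b ∧
    ∃ c, ∃ u ∈ attractor T b, ∃ v ∈ attractor T b, z = c + (T ^ n) u ∧ w = c + (T ^ n) v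

lemma SameLevelPiece.symm {n : ℕ} {z w : V} (h : SameLevelPiece T b n z w) :
    SameLevelPiece T b n w z := by
  obtain ⟨hz, hw, c, u, hu, v, hv, rfl, rfl⟩ := h
  exact ⟨hw, hz, c, v, hv, u, hu, rfl, rfl⟩

variable [CompleteSpace V]

lemma attractor_eq_union (hT : Summable fun n => ‖T ^ n‖) :
    attractor T b = T '' attractor T b ∪ (fun x => b + T x) '' attractor T b := by
  ext x
  rw [mem_attractor_iff b hT]
  constructor
  · rintro ⟨t, rfl | rfl, y, hy, rfl⟩
    · exact .inl ⟨y, hy, by simp⟩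
    · exact .inr ⟨y, hy, by simp⟩
  · rintro (⟨y, hy, rfl⟩ | ⟨y, hy, rfl⟩)
    · exact ⟨0, .inl rfl, y, hy, by simp⟩
    · exact ⟨1, .inr rfl, y, hy, by simp⟩

lemma SameLevelPiece.smul_add_apply (hT : Summable fun n => ‖T ^ n‖) {t : ℝ} (ht : t = 0 ∨ t = 1)
    {n : ℕ} {z w : V} (h : SameLevelPiece T b n z w) :
    SameLevelPiece T b (n + 1) (t • b + T z) (t • b + T w) := by
  obtain ⟨hz, hw, c, u, hu, v, hv, rfl, rfl⟩ := h
  refine ⟨(mem_attractor_iff b hT).2 ⟨t, ht, _, hz, rfl⟩,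
    (mem_attractor_iff b hT).2 ⟨t, ht, _, hw, rfl⟩, t • b + T c, u, hu, v, hv, ?_, ?_⟩ <;>
  simp [pow_succ', add_assoc]

lemma SameLevelPiece.dist_le (hT : Summable fun n => ‖T ^ n‖) {n : ℕ} {z w : V}
    (h : SameLevelPiece T b n z w) : dist z w ≤ ‖T ^ n‖ * Metric.diam (attractor T b) := by
  obtain ⟨-, -, c, u, hu, v, hv, rfl, rfl⟩ := h
  rw [dist_add_left]
  exact ((T ^ n).dist_le_opNorm u v).trans <| mul_le_mul_of_nonneg_left
    (Metric.dist_le_diam_of_mem (isCompact_attractor b hT).isBounded hu hv) (norm_nonneg _)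

/-- For the inductive step, join every point to `p = T y = b + T z`: writing `x = t • b + T x'`
and `p = t • b + T q`, lift a level-`n` chain from `x'` to `q` by `t • b + T ·`. -/
theorem reflTransGen_sameLevelPiece (hT : Summable fun n => ‖T ^ n‖) {y z : V}
    (hy : y ∈ attractor T b) (hz : z ∈ attractor T b) (hyz : T y = b + T z) (n : ℕ) :
    ∀ x ∈ attractor T b, ∀ x' ∈ attractor T b,
      ReflTransGen (SameLevelPiece T b n) x x' := by
  induction n with
  | zero =>
    intro x hx x' hx'
    exact .single ⟨hx, hx', 0, x, hx, x', hx', by simp, by simp⟩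
  | succ n ih =>
    have to_p : ∀ x ∈ attractor T b, ReflTransGen (SameLevelPiece T b (n + 1)) x (T y) := by
      intro x hx
      obtain ⟨t, ht, x', hx', rfl⟩ := (mem_attractor_iff b hT).1 hx
      obtain ⟨q, hq, hpq⟩ : ∃ q ∈ attractor T b, t • b + T q = T y := by
        rcases ht with rfl | rfl
        exacts [⟨y, hy, by simp⟩, ⟨z, hz, by simp [hyz]⟩]
      rw [← hpq]
      exact (ih x' hx' q hq).lift (fun w => t • b + T w) fun _ _ h => h.smul_add_apply b hT ht
    intro x hx x' hx'
    exact (to_p x hx).trans <|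
      ReflTransGen.mono (fun _ _ h => SameLevelPiece.symm b h) _ _ (to_p x' hx').swap

theorem isPreconnected_attractor (hT : Summable fun n => ‖T ^ n‖) {y z : V}
    (hy : y ∈ attractor T b) (hz : z ∈ attractor T b) (hyz : T y = b + T z) :
    IsPreconnected (attractor T b) := by
  refine (isCompact_attractor b hT).isPreconnected_of_forall_chain fun ε hε x hx x' hx' => ?_
  obtain ⟨n, hn⟩ : ∃ n, ‖T ^ n‖ * Metric.diam (attractor T b) < ε :=
    ((hT.tendsto_atTop_zero.mul_const _).eventually (gt_mem_nhds (by simpa using hε))).exists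
  exact ReflTransGen.mono (fun _ _ h => ⟨h.2.1, (h.dist_le b hT).trans_lt hn⟩) _ _
    (reflTransGen_sameLevelPiece b hT hy hz hyz n x hx x' hx')

theorem isConnected_attractor_iff (hT : Summable fun n => ‖T ^ n‖) :
    IsConnected (attractor T b) ↔ ∃ c, memB c ∧ digitSum T b c = 0 := by
  have hcompact := isCompact_attractor b hT
  rw [exists_memB_digitSum_eq_zero_iff b hT]
  constructor
  · intro hconn
    have hunion := attractor_eq_union b hT
    have hT_sub : T '' attractor T b ⊆ attractor T b := Set.subset_union_left.trans hunion.superset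
    have hbT_sub : (fun x => b + T x) '' attractor T b ⊆ attractor T b :=
      Set.subset_union_right.trans hunion.superset
    obtain ⟨_, -, ⟨y, hy, rfl⟩, ⟨z, hz, hzy⟩⟩ := isPreconnected_closed_iff.1 hconn.2 _ _
      (hcompact.image T.continuous).isClosed
      (hcompact.image (continuous_const.add T.continuous)).isClosed hunion.subset
      (((attractor_nonempty b).image _).mono (Set.subset_inter hT_sub subset_rfl))
      (((attractor_nonempty b).image _).mono (Set.subset_inter hbT_sub subset_rfl))
    exact ⟨y, hy, z, hz, hzy.symm⟩
  · rintro ⟨y, hy, z, hz, hyz⟩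
    exact ⟨attractor_nonempty b, isPreconnected_attractor b hT hy hz hyz⟩

end Connectedness

section PowerSeries

variable {x : ℝ} {c : ℕ → ℝ}

lemma summable_nat_mul_pow_sub_one (hx : |x| < 1) :
    Summable fun n : ℕ => (n : ℝ) * x ^ (n - 1) := by
  rw [← summable_nat_add_iff 1]
  have hgeom := summable_geometric_of_abs_lt_one hx
  have hmul : Summable fun n : ℕ => (n : ℝ) * x ^ n := by
    simpa using summable_pow_mul_geometric_of_norm_lt_one 1 (by rwa [Real.norm_eq_abs])
  refine (hmul.add hgeom).congr fun n => ?_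
  rw [Nat.add_sub_cancel]
  push_cast
  ring

lemma summable_mul_pow (hx : |x| < 1) (hc : ∀ n, |c n| ≤ 1) : Summable fun n => c n * x ^ n :=
  .of_norm_bounded (summable_geometric_of_lt_one (abs_nonneg x) hx) fun n => by
    rw [Real.norm_eq_abs, abs_mul, abs_pow]
    exact mul_le_of_le_one_left (by positivity) (hc n)

lemma norm_mul_nat_mul_pow_sub_one_le {y r : ℝ} (hy : |y| ≤ r) (hc : ∀ n, |c n| ≤ 1) (n : ℕ) :
    ‖c n * (n * y ^ (n - 1))‖ ≤ n * r ^ (n - 1) := by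
  rw [Real.norm_eq_abs, abs_mul, abs_mul, abs_pow, Nat.abs_cast]
  exact (mul_le_mul_of_nonneg_left (by gcongr) (abs_nonneg _)).trans
    (mul_le_of_le_one_left (by have := (abs_nonneg y).trans hy; positivity) (hc n))

lemma summable_mul_nat_mul_pow_sub_one (hx : |x| < 1) (hc : ∀ n, |c n| ≤ 1) :
    Summable fun n => c n * (n * x ^ (n - 1)) :=
  .of_norm_bounded (summable_nat_mul_pow_sub_one (by rwa [abs_abs]))
    (norm_mul_nat_mul_pow_sub_one_le le_rfl hc)

lemma hasDerivAt_seriesFun (hx : |x| < 1) (hc : ∀ n, |c n| ≤ 1) :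
    HasDerivAt (seriesFun c) (∑' n, c n * (n * x ^ (n - 1))) x := by
  set r := (1 + |x|) / 2
  have hxr : |x| < r := by simp only [r]; linarith
  have hr : |r| < 1 := by rw [abs_of_pos ((abs_nonneg x).trans_lt hxr)]; simp only [r]; linarith
  have hmem : x ∈ Set.Ioo (-r) r := abs_lt.1 hxr
  exact hasDerivAt_tsum_of_isPreconnected (summable_nat_mul_pow_sub_one hr) isOpen_Ioo
    isPreconnected_Ioo (fun n y _ => (hasDerivAt_pow n y).const_mul (c n))
    (fun n y hy => norm_mul_nat_mul_pow_sub_one_le (abs_le.2 ⟨hy.1.le, hy.2.le⟩) hc n) hmem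
    (summable_mul_pow hx hc) hmem

end PowerSeries

lemma jordanBlock_pow_mulVec (lam : ℝ) (n : ℕ) (x : Fin 2 → ℝ) :
    (!![lam, 1; 0, lam] ^ n).mulVec x = lam ^ n • x + (n * lam ^ (n - 1)) • ![x 1, 0] := by
  induction n with
  | zero => simp
  | succ n ih =>
    rw [pow_succ', ← Matrix.mulVec_mulVec, ih]
    ext i
    fin_cases i <;> rcases n with _ | n <;> simp [Matrix.mulVec, dotProduct, Fin.sum_univ_two] <;>
      ring

def jordanBlockCLM (lam : ℝ) : (Fin 2 → ℝ) →L[ℝ] (Fin 2 → ℝ) :=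
  LinearMap.toContinuousLinearMap (Matrix.toLin' !![lam, 1; 0, lam])

lemma jordanBlockCLM_pow_apply (lam : ℝ) (n : ℕ) (x : Fin 2 → ℝ) :
    (jordanBlockCLM lam ^ n) x = (!![lam, 1; 0, lam] ^ n).mulVec x := by
  induction n generalizing x with
  | zero => simp
  | succ n ih =>
    rw [pow_succ, pow_succ, ← Matrix.mulVec_mulVec, ← ih]
    rfl

lemma norm_jordanBlockCLM_pow_le (lam : ℝ) (n : ℕ) :
    ‖jordanBlockCLM lam ^ n‖ ≤ |lam| ^ n + n * |lam| ^ (n - 1) := by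
  refine ContinuousLinearMap.opNorm_le_bound _ (by positivity) fun x => ?_
  have hshift : ‖![x 1, 0]‖ ≤ ‖x‖ := by
    refine (pi_norm_le_iff_of_nonneg (norm_nonneg x)).2 fun i => ?_
    fin_cases i
    · exact norm_le_pi_norm x 1
    · simp
  rw [jordanBlockCLM_pow_apply, jordanBlock_pow_mulVec, add_mul]
  refine (norm_add_le _ _).trans (add_le_add ?_ ?_) <;>
    rw [norm_smul, Real.norm_eq_abs]
  · rw [abs_pow]
  · rw [abs_mul, abs_pow, Nat.abs_cast]
    exact mul_le_mul_of_nonneg_left hshift (by positivity)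

lemma summable_norm_jordanBlockCLM_pow {lam : ℝ} (h : |lam| < 1) :
    Summable fun n => ‖jordanBlockCLM lam ^ n‖ :=
  .of_nonneg_of_le (fun _ => norm_nonneg _) (norm_jordanBlockCLM_pow_le lam)
    ((summable_geometric_of_lt_one (abs_nonneg lam) h).add
      (summable_nat_mul_pow_sub_one (by rwa [abs_abs])))

lemma tsum_smul_jordanBlock_pow_mulVec {lam : ℝ} (h : |lam| < 1) {c : ℕ → ℝ}
    (hc : ∀ n, |c n| ≤ 1) (x : Fin 2 → ℝ) :
    ∑' n, c n • ((!![lam, 1; 0, lam] ^ n).mulVec x) =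
      seriesFun c lam • x + deriv (seriesFun c) lam • ![x 1, 0] := by
  simp_rw [jordanBlock_pow_mulVec, smul_add, smul_smul]
  rw [(hasDerivAt_seriesFun h hc).deriv, seriesFun,
    ((summable_mul_pow h hc).smul_const x).tsum_add
      ((summable_mul_nat_mul_pow_sub_one h hc).smul_const _),
    (summable_mul_pow h hc).tsum_smul_const,
    (summable_mul_nat_mul_pow_sub_one h hc).tsum_smul_const]

lemma smul_add_smul_eq_zero_iff {x : Fin 2 → ℝ} (hx : x 1 ≠ 0) {s t : ℝ} :
    s • x + t • ![x 1, 0] = 0 ↔ s = 0 ∧ t = 0 := by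
  constructor
  · intro h
    have hs : s = 0 := by simpa [hx] using congrFun h 1
    subst hs
    exact ⟨rfl, by simpa [hx] using congrFun h 0⟩
  · rintro ⟨rfl, rfl⟩
    simp

/-- For `λ ∈ (-1,1)`, `T = [[λ,1],[0,λ]]` and `b = (b₁,b₂)` with `b₂ ≠ 0`,
the attractor `E = { ∑ aₙ Tⁿ b : aₙ ∈ {0,1} }` is connected iff some `f ∈ ℬ` satisfies
`f(λ) = f'(λ) = 0`. -/
theorem stmt2 (lam : ℝ) (hlam : lam ∈ Set.Ioo (-1 : ℝ) 1) (b : Fin 2 → ℝ) (hb : b 1 ≠ 0) :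
    IsConnected {p : Fin 2 → ℝ | ∃ a : ℕ → ℝ, (∀ n, a n = 0 ∨ a n = 1) ∧
        p = ∑' n, a n • ((!![lam, 1; 0, lam] ^ n).mulVec b)} ↔
      ∃ c : ℕ → ℝ, memB c ∧ seriesFun c lam = 0 ∧ deriv (seriesFun c) lam = 0 := by
  have h : |lam| < 1 := abs_lt.2 hlam
  have hset : {p : Fin 2 → ℝ | ∃ a : ℕ → ℝ, (∀ n, a n = 0 ∨ a n = 1) ∧
      p = ∑' n, a n • ((!![lam, 1; 0, lam] ^ n).mulVec b)} = attractor (jordanBlockCLM lam) b := by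
    ext p
    simp only [attractor, digitSum, jordanBlockCLM_pow_apply, Set.mem_image, Set.mem_ofPred_eq,
      eq_comm]
  rw [hset, isConnected_attractor_iff b (summable_norm_jordanBlockCLM_pow h)]
  refine exists_congr fun c => and_congr_right fun hc => ?_
  simp only [digitSum, jordanBlockCLM_pow_apply]
  rw [tsum_smul_jordanBlock_pow_mulVec h (abs_le_one_of_memB hc), smul_add_smul_eq_zero_iff hb]
end
end

section
/- Suppose 1/2 < γ₀ < λ₀ < 1, h ∈ ℬ satisfies h(γ₀) = h(λ₀) = 0, the coefficients of h are eventually +1 (there exists N₀ with aₙ = 1 for all n ≥ N₀), h′(γ₀) < 0 and h′(λ₀) > 0. Then there exists N₁ ∈ ℕ such that for every N ≥ N₁ and every power series R(x) = ∑_{n≥0} rₙ xⁿ with coefficients rₙ ∈ {0,1}, the function f(x) = h(x) − x^N R(x) has zeros γ̃ and λ̃ in (0,1) satisfying 2γ₀^N R(γ₀)/(3|h′(γ₀)|) ≤ γ₀ − γ̃ ≤ 2γ₀^N R(γ₀)/|h′(γ₀)| and 2λ₀^N R(λ₀)/(3h′(λ₀)) ≤ λ̃ − λ₀ ≤ 2λ₀^N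 R(λ₀)/h′(λ₀). -/
open Set Filter Topology

noncomputable section

/-! Write `P_N(x) = x ^ N R(x)`. On `[-β, β] ⊂ (-1, 1)` the function `P_N` is Lipschitz with
constant `∑_{k ≥ N} k β^(k-1)`, uniformly in the `0-1` series `R`, and this tail tends to `0`.
Hence near a simple zero `x₀` of `h`, for large `N`, every secant slope of `f = h - P_N` from `x₀`
stays within `c / 2` of `h'(x₀)`, where `c = |h'(x₀)|`, while `f(x₀) = -P_N(x₀) ≤ 0` is tiny.
So, moving from `x₀` in the direction in which `h` increases, `f` rises from `-ρ`, `ρ = P_N(x₀)`,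
at a rate between `c / 2` and `3c / 2`, and vanishes at a distance between `2ρ / (3c)` and `2ρ / c`
from `x₀`. -/

lemma abs_le_one_of_memB_s8 {a : ℕ → ℝ} (ha : memB a) (n : ℕ) : |a n| ≤ 1 := by
  rcases Nat.eq_zero_or_pos n with rfl | hn
  · simp [ha.1]
  · rcases ha.2 n hn with e | e | e <;> simp [e]

lemma analyticOnNhd_seriesFun {a : ℕ → ℝ} (ha : ∀ n, |a n| ≤ 1) :
    AnalyticOnNhd ℝ (seriesFun a) (Ioo (-1) 1) := by
  set p := FormalMultilinearSeries.ofScalars ℝ a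
  have hsum : seriesFun a = p.sum := funext fun x =>
    (FormalMultilinearSeries.ofScalars_sum_eq a x).symm
  have hp : 1 ≤ p.radius :=
    p.le_radius_of_bound 1 fun n => by simpa [p, FormalMultilinearSeries.ofScalars_norm] using ha n
  intro x hx
  rw [hsum]
  refine (p.hasFPowerSeriesOnBall (one_pos.trans_le hp)).analyticOnNhd x ?_
  refine lt_of_lt_of_le ?_ hp
  rw [edist_dist, dist_zero_right, ENNReal.ofReal_lt_one]
  exact abs_lt.2 hx

lemma summable_mul_pow_of_abs_le_one {a : ℕ → ℝ} (ha : ∀ n, |a n| ≤ 1) {x : ℝ} (hx : |x| < 1) :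
    Summable fun n => a n * x ^ n := by
  refine .of_norm_bounded (summable_geometric_of_lt_one (abs_nonneg x) hx) fun n => ?_
  rw [norm_mul, norm_pow, Real.norm_eq_abs, Real.norm_eq_abs]
  exact mul_le_of_le_one_left (by positivity) (ha n)

lemma seriesFun_nonneg {a : ℕ → ℝ} (ha : ∀ n, 0 ≤ a n) {x : ℝ} (hx : 0 ≤ x) :
    0 ≤ seriesFun a x :=
  tsum_nonneg fun n => mul_nonneg (ha n) (pow_nonneg hx n)

lemma summable_coe_mul_pow_sub_one {β : ℝ} (hβ0 : 0 ≤ β) (hβ1 : β < 1) :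
    Summable fun k : ℕ => (k : ℝ) * β ^ (k - 1) := by
  refine (summable_nat_add_iff 1).1 ?_
  have h1 := summable_pow_mul_geometric_of_norm_lt_one 1 (by rwa [Real.norm_of_nonneg hβ0])
  refine (h1.add (summable_geometric_of_lt_one hβ0 hβ1)).congr fun k => ?_
  simp only [pow_one, Nat.cast_add, Nat.cast_one, Nat.add_sub_cancel]
  ring

lemma abs_pow_mul_seriesFun_sub_le {a : ℕ → ℝ} (ha : ∀ n, |a n| ≤ 1) {β : ℝ} (hβ0 : 0 ≤ β)
    (hβ1 : β < 1) (N : ℕ) {x y : ℝ} (hx : |x| ≤ β) (hy : |y| ≤ β) :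
    |x ^ N * seriesFun a x - y ^ N * seriesFun a y| ≤
      (∑' n, ((n + N : ℕ) : ℝ) * β ^ (n + N - 1)) * |x - y| := by
  have hshift : ∀ z, |z| < 1 → HasSum (fun n => a n * z ^ (n + N)) (z ^ N * seriesFun a z) :=
    fun z hz => ((summable_mul_pow_of_abs_le_one ha hz).hasSum.mul_left (z ^ N)).congr_fun
      fun n => by ring
  have hg := (summable_nat_add_iff N).2 (summable_coe_mul_pow_sub_one hβ0 hβ1)
  rw [← Real.norm_eq_abs]
  refine ((hshift x (by linarith)).sub (hshift y (by linarith))).norm_le_of_bounded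
    (hg.hasSum.mul_right |x - y|) fun n => ?_
  calc ‖a n * x ^ (n + N) - a n * y ^ (n + N)‖
      ≤ |x ^ (n + N) - y ^ (n + N)| := by
        rw [← mul_sub, norm_mul, Real.norm_eq_abs]
        exact mul_le_of_le_one_left (abs_nonneg _) (ha n)
    _ ≤ |x - y| * (n + N : ℕ) * max |x| |y| ^ (n + N - 1) := abs_pow_sub_pow_le ..
    _ = ((n + N : ℕ) : ℝ) * max |x| |y| ^ (n + N - 1) * |x - y| := by ring
    _ ≤ ((n + N : ℕ) : ℝ) * β ^ (n + N - 1) * |x - y| := by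
        gcongr
        exact max_le hx hy

lemma eventually_abs_pow_mul_seriesFun_sub_le {β ε : ℝ} (hβ0 : 0 ≤ β) (hβ1 : β < 1)
    (hε : 0 < ε) :
    ∀ᶠ N in atTop, ∀ a : ℕ → ℝ, (∀ n, |a n| ≤ 1) → ∀ x y, |x| ≤ β → |y| ≤ β →
      |x ^ N * seriesFun a x - y ^ N * seriesFun a y| ≤ ε * |x - y| := by
  have hT := tendsto_sum_nat_add fun k : ℕ => (k : ℝ) * β ^ (k - 1)
  filter_upwards [hT.eventually (ge_mem_nhds hε)] with N hN a ha x y hx hy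
  exact (abs_pow_mul_seriesFun_sub_le ha hβ0 hβ1 N hx hy).trans (by gcongr)

lemma exists_zero_of_abs_sub_sub_le_of_pos {f : ℝ → ℝ} {x₀ d ρ : ℝ} (hd : 0 < d) (hρ : 0 ≤ ρ)
    (hf : ContinuousOn f (Icc x₀ (x₀ + 2 * ρ / d))) (hfx₀ : f x₀ = -ρ)
    (hslope : ∀ x ∈ Icc x₀ (x₀ + 2 * ρ / d), |f x - f x₀ - d * (x - x₀)| ≤ d / 2 * (x - x₀)) :
    ∃ x, f x = 0 ∧ 2 * ρ / (3 * d) ≤ x - x₀ ∧ x - x₀ ≤ 2 * ρ / d := by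
  have hlo : x₀ ≤ x₀ + 2 * ρ / (3 * d) := le_add_of_nonneg_right (by positivity)
  have hab : x₀ + 2 * ρ / (3 * d) ≤ x₀ + 2 * ρ / d := by
    gcongr
    linarith
  have ha : f (x₀ + 2 * ρ / (3 * d)) ≤ 0 := by
    have h := (abs_le.1 (hslope _ ⟨hlo, hab⟩)).2
    have e : d * (x₀ + 2 * ρ / (3 * d) - x₀) = 2 * ρ / 3 := by field_simp; ring
    linarith
  have hb : 0 ≤ f (x₀ + 2 * ρ / d) := by
    have h := (abs_le.1 (hslope _ ⟨hlo.trans hab, le_rfl⟩)).1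
    have e : d * (x₀ + 2 * ρ / d - x₀) = 2 * ρ := by field_simp; ring
    linarith
  obtain ⟨x, hx, hfx⟩ := intermediate_value_Icc hab (hf.mono (Icc_subset_Icc hlo le_rfl)) ⟨ha, hb⟩
  exact ⟨x, hfx, by linarith [hx.1], by linarith [hx.2]⟩

lemma exists_zero_of_abs_sub_sub_le_of_neg {f : ℝ → ℝ} {x₀ d ρ : ℝ} (hd : d < 0) (hρ : 0 ≤ ρ)
    (hf : ContinuousOn f (Icc (x₀ - 2 * ρ / |d|) x₀)) (hfx₀ : f x₀ = -ρ)
    (hslope : ∀ x ∈ Icc (x₀ - 2 * ρ / |d|) x₀,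
      |f x - f x₀ - d * (x - x₀)| ≤ |d| / 2 * (x₀ - x)) :
    ∃ x, f x = 0 ∧ 2 * ρ / (3 * |d|) ≤ x₀ - x ∧ x₀ - x ≤ 2 * ρ / |d| := by
  rw [abs_of_neg hd] at *
  have hd0 : d ≠ 0 := hd.ne
  have hhi : x₀ - 2 * ρ / (3 * -d) ≤ x₀ := sub_le_self _ (div_nonneg (by positivity) (by linarith))
  have hab : x₀ - 2 * ρ / -d ≤ x₀ - 2 * ρ / (3 * -d) := by
    gcongr
    all_goals linarith
  have ha : 0 ≤ f (x₀ - 2 * ρ / -d) := by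
    have h := (abs_le.1 (hslope _ ⟨le_rfl, hab.trans hhi⟩)).1
    have e : -d * (x₀ - (x₀ - 2 * ρ / -d)) = 2 * ρ := by field_simp; ring
    linarith
  have hb : f (x₀ - 2 * ρ / (3 * -d)) ≤ 0 := by
    have h := (abs_le.1 (hslope _ ⟨hab, hhi⟩)).2
    have e : -d * (x₀ - (x₀ - 2 * ρ / (3 * -d))) = 2 * ρ / 3 := by field_simp; ring
    linarith
  obtain ⟨x, hx, hfx⟩ := intermediate_value_Icc' hab (hf.mono (Icc_subset_Icc le_rfl hhi)) ⟨hb, ha⟩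
  exact ⟨x, hfx, by linarith [hx.2], by linarith [hx.1]⟩

lemma exists_pos_eventually_sub_pow_mul_seriesFun_slope_le {H : ℝ → ℝ} {x₀ d : ℝ}
    (hx₀ : x₀ ∈ Ioo 0 1) (hH : ContinuousOn H (Ioo 0 1)) (hHd : HasDerivAt H d x₀) (hd : d ≠ 0) :
    ∃ δ > 0, ∀ᶠ N in atTop, ∀ r : ℕ → ℝ, (∀ n, r n ∈ Icc 0 1) →
      2 * (x₀ ^ N * seriesFun r x₀) / |d| ≤ δ ∧
      ContinuousOn (fun x => H x - x ^ N * seriesFun r x) (Icc (x₀ - δ) (x₀ + δ)) ∧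
      ∀ x ∈ Icc (x₀ - δ) (x₀ + δ), x ∈ Ioo 0 1 ∧
        |(H x - x ^ N * seriesFun r x) - (H x₀ - x₀ ^ N * seriesFun r x₀) - d * (x - x₀)| ≤
          |d| / 2 * |x - x₀| := by
  obtain ⟨hx₀0, hx₀1⟩ := hx₀
  obtain ⟨β, hx₀β, hβ1⟩ := exists_between hx₀1
  have hd4 : 0 < |d| / 4 := by positivity
  have hHloc : ∀ᶠ x in 𝓝 x₀, x ∈ Ioo 0 β ∧ |H x - H x₀ - d * (x - x₀)| ≤ |d| / 4 * |x - x₀| :=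
    Filter.Eventually.and (Ioo_mem_nhds hx₀0 hx₀β) <| (hHd.isLittleO.def hd4).mono fun x hx => by
      simpa [mul_comm] using hx
  obtain ⟨δ, hδ, hδloc⟩ := Metric.nhds_basis_closedBall.eventually_iff.1 hHloc
  rw [Real.closedBall_eq_Icc] at hδloc
  have hδ1 : δ < 1 := by linarith [(hδloc (x := x₀ - δ) ⟨le_rfl, by linarith⟩).1.1]
  refine ⟨δ, hδ, ?_⟩
  have hβ0 : 0 ≤ β := by linarith
  filter_upwards [eventually_abs_pow_mul_seriesFun_sub_le hβ0 hβ1 (by positivity : 0 < |d| * δ / 4),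
    eventually_ge_atTop 1] with N hlip hN1 r hr
  have hr' : ∀ n, |r n| ≤ 1 := fun n => abs_le.2 ⟨by linarith [(hr n).1], (hr n).2⟩
  have hx₀β' : |x₀| ≤ β := by rw [abs_of_pos hx₀0]; exact hx₀β.le
  have hsub : Icc (x₀ - δ) (x₀ + δ) ⊆ Ioo 0 1 := fun x hx =>
    Ioo_subset_Ioo_right hβ1.le (hδloc hx).1
  refine ⟨?_, ?_, fun x hx => ⟨hsub hx, ?_⟩⟩
  · -- compare with the point `0`, where `x ^ N * seriesFun r x` vanishes as `N ≥ 1`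
    have h := hlip r hr' x₀ 0 hx₀β' (by simpa using hβ0)
    have hρ := mul_nonneg (pow_nonneg hx₀0.le N) (seriesFun_nonneg (fun n => (hr n).1) hx₀0.le)
    rw [zero_pow (by omega), zero_mul, sub_zero, sub_zero, abs_of_pos hx₀0, abs_of_nonneg hρ] at h
    rw [div_le_iff₀ (abs_pos.2 hd)]
    nlinarith [mul_pos (abs_pos.2 hd) hδ, sub_pos.2 hx₀1]
  · exact (hH.mono hsub).sub ((continuousOn_pow N).mul
      ((analyticOnNhd_seriesFun hr').continuousOn.mono
        (hsub.trans (Ioo_subset_Ioo_left (by norm_num)))))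
  · have hxβ : |x| ≤ β := by
      have := (hδloc hx).1
      rw [abs_of_pos this.1]; exact this.2.le
    have hH := (hδloc hx).2
    have hP := hlip r hr' x x₀ hxβ hx₀β'
    calc _ = |(H x - H x₀ - d * (x - x₀)) - (x ^ N * seriesFun r x - x₀ ^ N * seriesFun r x₀)| := by
          ring_nf
      _ ≤ |d| / 4 * |x - x₀| + |d| * δ / 4 * |x - x₀| := (abs_sub _ _).trans (add_le_add hH hP)
      _ ≤ |d| / 4 * |x - x₀| + |d| * 1 / 4 * |x - x₀| := by gcongr
      _ = |d| / 2 * |x - x₀| := by ring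

theorem eventually_exists_zero_sub_pow_mul_seriesFun_of_deriv_pos {H : ℝ → ℝ} {x₀ d : ℝ}
    (hx₀ : x₀ ∈ Ioo 0 1) (hH : ContinuousOn H (Ioo 0 1)) (hHx₀ : H x₀ = 0)
    (hHd : HasDerivAt H d x₀) (hd : 0 < d) :
    ∀ᶠ N in atTop, ∀ r : ℕ → ℝ, (∀ n, r n ∈ Icc 0 1) →
      ∃ x ∈ Ioo 0 1, H x - x ^ N * seriesFun r x = 0 ∧
        2 * x₀ ^ N * seriesFun r x₀ / (3 * d) ≤ x - x₀ ∧
        x - x₀ ≤ 2 * x₀ ^ N * seriesFun r x₀ / d := by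
  obtain ⟨δ, hδ0, hδ⟩ := exists_pos_eventually_sub_pow_mul_seriesFun_slope_le hx₀ hH hHd hd.ne'
  filter_upwards [hδ] with N hN r hr
  obtain ⟨hρδ, hcont, hslope⟩ := hN r hr
  rw [abs_of_pos hd] at hρδ hslope
  have hsub : Icc x₀ (x₀ + 2 * (x₀ ^ N * seriesFun r x₀) / d) ⊆ Icc (x₀ - δ) (x₀ + δ) :=
    Icc_subset_Icc (by linarith) (by linarith)
  have hρ : 0 ≤ x₀ ^ N * seriesFun r x₀ :=
    mul_nonneg (pow_nonneg hx₀.1.le N) (seriesFun_nonneg (fun n => (hr n).1) hx₀.1.le)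
  obtain ⟨x, hx, hlo, hhi⟩ := exists_zero_of_abs_sub_sub_le_of_pos hd hρ (hcont.mono hsub)
    (by simp [hHx₀])
    fun x hx => by simpa [abs_of_nonneg (sub_nonneg.2 hx.1)] using (hslope x (hsub hx)).2
  have hxmem : x ∈ Icc x₀ (x₀ + 2 * (x₀ ^ N * seriesFun r x₀) / d) :=
    ⟨by linarith [div_nonneg (mul_nonneg zero_le_two hρ) (by linarith : (0 : ℝ) ≤ 3 * d)],
      by linarith⟩
  refine ⟨x, (hslope x (hsub hxmem)).1, hx, ?_, ?_⟩ <;> rwa [mul_assoc]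

theorem eventually_exists_zero_sub_pow_mul_seriesFun_of_deriv_neg {H : ℝ → ℝ} {x₀ d : ℝ}
    (hx₀ : x₀ ∈ Ioo 0 1) (hH : ContinuousOn H (Ioo 0 1)) (hHx₀ : H x₀ = 0)
    (hHd : HasDerivAt H d x₀) (hd : d < 0) :
    ∀ᶠ N in atTop, ∀ r : ℕ → ℝ, (∀ n, r n ∈ Icc 0 1) →
      ∃ x ∈ Ioo 0 1, H x - x ^ N * seriesFun r x = 0 ∧
        2 * x₀ ^ N * seriesFun r x₀ / (3 * |d|) ≤ x₀ - x ∧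
        x₀ - x ≤ 2 * x₀ ^ N * seriesFun r x₀ / |d| := by
  obtain ⟨δ, hδ0, hδ⟩ := exists_pos_eventually_sub_pow_mul_seriesFun_slope_le hx₀ hH hHd hd.ne
  filter_upwards [hδ] with N hN r hr
  obtain ⟨hρδ, hcont, hslope⟩ := hN r hr
  have hsub : Icc (x₀ - 2 * (x₀ ^ N * seriesFun r x₀) / |d|) x₀ ⊆ Icc (x₀ - δ) (x₀ + δ) :=
    Icc_subset_Icc (by linarith) (by linarith)
  have hρ : 0 ≤ x₀ ^ N * seriesFun r x₀ :=
    mul_nonneg (pow_nonneg hx₀.1.le N) (seriesFun_nonneg (fun n => (hr n).1) hx₀.1.le)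
  obtain ⟨x, hx, hlo, hhi⟩ := exists_zero_of_abs_sub_sub_le_of_neg hd hρ (hcont.mono hsub)
    (by simp [hHx₀])
    fun x hx => by simpa [abs_of_nonpos (sub_nonpos.2 hx.2)] using (hslope x (hsub hx)).2
  have hxmem : x ∈ Icc (x₀ - 2 * (x₀ ^ N * seriesFun r x₀) / |d|) x₀ :=
    ⟨by linarith,
      by linarith [div_nonneg (mul_nonneg zero_le_two hρ) (by positivity : (0 : ℝ) ≤ 3 * |d|)]⟩
  refine ⟨x, (hslope x (hsub hxmem)).1, hx, ?_, ?_⟩ <;> rwa [mul_assoc]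

theorem stmt8_general (γ₀ lam₀ : ℝ) (h12 : 1 / 2 < γ₀) (hgl : γ₀ < lam₀) (hlam1 : lam₀ < 1)
    (h : ℕ → ℝ) (hB : memB h) (hz0 : seriesFun h γ₀ = 0) (hz1 : seriesFun h lam₀ = 0)
    (hd0 : deriv (seriesFun h) γ₀ < 0) (hd1 : 0 < deriv (seriesFun h) lam₀) :
    ∃ N₁ : ℕ, ∀ N, N₁ ≤ N → ∀ r : ℕ → ℝ, (∀ n, r n = 0 ∨ r n = 1) →
      ∃ γt lamt : ℝ, γt ∈ Set.Ioo (0 : ℝ) 1 ∧ lamt ∈ Set.Ioo (0 : ℝ) 1 ∧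
        seriesFun h γt - γt ^ N * (∑' n, r n * γt ^ n) = 0 ∧
        seriesFun h lamt - lamt ^ N * (∑' n, r n * lamt ^ n) = 0 ∧
        2 * γ₀ ^ N * (∑' n, r n * γ₀ ^ n) / (3 * |deriv (seriesFun h) γ₀|) ≤ γ₀ - γt ∧
        γ₀ - γt ≤ 2 * γ₀ ^ N * (∑' n, r n * γ₀ ^ n) / |deriv (seriesFun h) γ₀| ∧
        2 * lam₀ ^ N * (∑' n, r n * lam₀ ^ n) / (3 * deriv (seriesFun h) lam₀) ≤ lamt - lam₀ ∧
        lamt - lam₀ ≤ 2 * lam₀ ^ N * (∑' n, r n * lam₀ ^ n) / deriv (seriesFun h) lam₀ := by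
  have hh := abs_le_one_of_memB_s8 hB
  have hH : ContinuousOn (seriesFun h) (Ioo 0 1) :=
    (analyticOnNhd_seriesFun hh).continuousOn.mono (Ioo_subset_Ioo_left (by norm_num))
  have hγ₀ : γ₀ ∈ Ioo 0 1 := ⟨by linarith, by linarith⟩
  have hlam₀ : lam₀ ∈ Ioo 0 1 := ⟨by linarith, hlam1⟩
  have hderiv : ∀ x ∈ Ioo (0 : ℝ) 1, HasDerivAt (seriesFun h) (deriv (seriesFun h) x) x :=
    fun x hx =>
      (analyticOnNhd_seriesFun hh x ⟨by linarith [hx.1], hx.2⟩).differentiableAt.hasDerivAt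
  have hγside := eventually_exists_zero_sub_pow_mul_seriesFun_of_deriv_neg hγ₀ hH hz0
    (hderiv γ₀ hγ₀) hd0
  have hlamside := eventually_exists_zero_sub_pow_mul_seriesFun_of_deriv_pos hlam₀ hH hz1
    (hderiv lam₀ hlam₀) hd1
  obtain ⟨N₁, hN₁⟩ := eventually_atTop.1 (hγside.and hlamside)
  refine ⟨N₁, fun N hN r hr => ?_⟩
  have hr' : ∀ n, r n ∈ Icc (0 : ℝ) 1 := fun n => by rcases hr n with e | e <;> simp [e]
  obtain ⟨γt, hγt, hfγ, hγlo, hγhi⟩ := (hN₁ N hN).1 r hr'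
  obtain ⟨lamt, hlamt, hflam, hlamlo, hlamhi⟩ := (hN₁ N hN).2 r hr'
  exact ⟨γt, lamt, hγt, hlamt, hfγ, hflam, hγlo, hγhi, hlamlo, hlamhi⟩

/-- Lemma on nearby zeros: if `h ∈ ℬ` vanishes at `1/2 < γ₀ < λ₀ < 1`, has
coefficients eventually `+1`, `h'(γ₀) < 0 < h'(λ₀)`, then for all large `N` and every
0-1 power series `R`, the function `f(x) = h(x) - x^N R(x)` has zeros `γ̃, λ̃` with the
stated two-sided estimates. -/
theorem stmt8 (γ₀ lam₀ : ℝ) (h12 : 1 / 2 < γ₀) (hgl : γ₀ < lam₀) (hlam1 : lam₀ < 1)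
    (h : ℕ → ℝ) (hB : memB h) (hz0 : seriesFun h γ₀ = 0) (hz1 : seriesFun h lam₀ = 0)
    (hev : ∃ N₀ : ℕ, ∀ n, N₀ ≤ n → h n = 1)
    (hd0 : deriv (seriesFun h) γ₀ < 0) (hd1 : 0 < deriv (seriesFun h) lam₀) :
    ∃ N₁ : ℕ, ∀ N, N₁ ≤ N → ∀ r : ℕ → ℝ, (∀ n, r n = 0 ∨ r n = 1) →
      ∃ γt lamt : ℝ, γt ∈ Set.Ioo (0 : ℝ) 1 ∧ lamt ∈ Set.Ioo (0 : ℝ) 1 ∧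
        seriesFun h γt - γt ^ N * (∑' n, r n * γt ^ n) = 0 ∧
        seriesFun h lamt - lamt ^ N * (∑' n, r n * lamt ^ n) = 0 ∧
        2 * γ₀ ^ N * (∑' n, r n * γ₀ ^ n) / (3 * |deriv (seriesFun h) γ₀|) ≤ γ₀ - γt ∧
        γ₀ - γt ≤ 2 * γ₀ ^ N * (∑' n, r n * γ₀ ^ n) / |deriv (seriesFun h) γ₀| ∧
        2 * lam₀ ^ N * (∑' n, r n * lam₀ ^ n) / (3 * deriv (seriesFun h) lam₀) ≤ lamt - lam₀ ∧
        lamt - lam₀ ≤ 2 * lam₀ ^ N * (∑' n, r n * lam₀ ^ n) / deriv (seriesFun h) lam₀ :=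
  stmt8_general γ₀ lam₀ h12 hgl hlam1 h hB hz0 hz1 hd0 hd1
end
end
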